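/- Non-derivability under non-commutativity: in the Lambek grammar with lexical types A : (p/q)/r and B : s/((p/r)/q) over distinct atomic types p, q, r, s, the sequent B A ⊢ s is NOT derivable in the Lambek calculus S_IE, even though the corresponding simply-typed (non-oriented) term B(λy z. A z y) is well-typed of type s. -/
import Mathlib


inductive OType (Pr : Type) where
  | atom : Pr → OType Pr
  | over : OType Pr → OType Pr → OType Pr   -- `over β α` is β/α
  | under : OType Pr → OType Pr → OType Pr  -- `under α β` is α\β
deriving DecidableEq

/-- The product-free Lambek calculus S_IE on sequents `Γ ⊢ β` with `Γ` a
nonempty word of types (the lexicon rule replaces each lexical symbol by one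
of its types, so words of lexical symbols are analysed through their type
assignments). -/
inductive Der {Pr : Type} : List (OType Pr) → OType Pr → Prop where
  | ax (α : OType Pr) : Der [α] α
  | introR {Γ : List (OType Pr)} {α β : OType Pr} :
      Γ ≠ [] → Der (Γ ++ [α]) β → Der Γ (.over β α)
  | introL {Γ : List (OType Pr)} {α β : OType Pr} :
      Γ ≠ [] → Der (α :: Γ) β → Der Γ (.under α β)
  | elimR {Γ Δ : List (OType Pr)} {α β : OType Pr} :
      Der Γ (.over β α) → Der Δ α → Der (Γ ++ Δ) β
  | elimL {Γ Δ : List (OType Pr)} {α β : OType Pr} :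
      Der Γ (.under α β) → Der Δ α → Der (Δ ++ Γ) β

/-- Atomic types p, q, r, s. -/
inductive At where
  | p | q | r | s
deriving DecidableEq

/-- A : (p/q)/r -/
def tyA : OType At := .over (.over (.atom .p) (.atom .q)) (.atom .r)
/-- B : s/((p/r)/q) -/
def tyB : OType At := .over (.atom .s) (.over (.over (.atom .p) (.atom .r)) (.atom .q))

/-- Simple (non-oriented) types. -/
inductive SType (Pr : Type) where
  | atom : Pr → SType Pr
  | arrow : SType Pr → SType Pr → SType Pr
deriving DecidableEq

/-- The two constants A and B. -/
inductive K where
  | A | B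
deriving DecidableEq

/-- Erased type assignment: A : r → q → p and B : (q → r → p) → s. -/
def τK : K → SType At
  | .A => .arrow (.atom .r) (.arrow (.atom .q) (.atom .p))
  | .B => .arrow (.arrow (.atom .q) (.arrow (.atom .r) (.atom .p))) (.atom .s)

/-- Simply-typed λ-terms with constants from K. -/
inductive STm where
  | var : ℕ → STm
  | const : K → STm
  | lam : ℕ → SType At → STm → STm
  | app : STm → STm → STm

/-- Simply typed λ-calculus with constants. -/
inductive STy : (ℕ → Option (SType At)) → STm → SType At → Prop where
  | var {Γ : ℕ → Option (SType At)} {x : ℕ} {σ : SType At} :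
      Γ x = some σ → STy Γ (.var x) σ
  | const {Γ : ℕ → Option (SType At)} (k : K) : STy Γ (.const k) (τK k)
  | lam {Γ : ℕ → Option (SType At)} {x : ℕ} {σ τ : SType At} {u : STm} :
      STy (Function.update Γ x (some σ)) u τ → STy Γ (.lam x σ u) (.arrow σ τ)
  | app {Γ : ℕ → Option (SType At)} {u v : STm} {σ τ : SType At} :
      STy Γ u (.arrow σ τ) → STy Γ v σ → STy Γ (.app u v) τ

/-- The term B (λy z. A z y). -/
def counterTerm : STm :=
  .app (.const .B)
    (.lam 0 (.atom .q) (.lam 1 (.atom .r)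
      (.app (.app (.const .A) (.var 1)) (.var 0))))

/-- Group interpretation of atoms. -/
def gAt : At → Equiv.Perm (Fin 3)
  | .p => 1
  | .s => 1
  | .q => Equiv.swap 0 1
  | .r => Equiv.swap 1 2

/-- Group interpretation of oriented types. -/
def gT : OType At → Equiv.Perm (Fin 3)
  | .atom a => gAt a
  | .over β α => gT β * (gT α)⁻¹
  | .under α β => (gT α)⁻¹ * gT β

lemma der_prod {Γ : List (OType At)} {β : OType At} (h : Der Γ β) :
    (Γ.map gT).prod = gT β := by
  induction h with
  | ax α => simp
  | introR hne hd ih =>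
      simp only [List.map_append, List.prod_append, List.map_cons, List.map_nil,
        List.prod_cons, List.prod_nil, mul_one] at ih
      show _ = gT _ * (gT _)⁻¹
      exact eq_mul_inv_of_mul_eq ih
  | introL hne hd ih =>
      simp only [List.map_cons, List.prod_cons] at ih
      show _ = (gT _)⁻¹ * gT _
      exact eq_inv_mul_of_mul_eq ih
  | elimR h1 h2 ih1 ih2 =>
      simp only [List.map_append, List.prod_append, ih1, ih2]
      show gT _ * (gT _)⁻¹ * gT _ = _
      group
  | elimL h1 h2 ih1 ih2 =>
      simp only [List.map_append, List.prod_append, ih1, ih2]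
      show gT _ * ((gT _)⁻¹ * gT _) = _
      group

/-- Non-derivability under non-commutativity: with A : (p/q)/r and
B : s/((p/r)/q), the sequent B A ⊢ s is not derivable in S_IE, although the
corresponding non-oriented term B (λy z. A z y) is simply typable of type s. -/
theorem BA_not_derivable :
    ¬ Der [tyB, tyA] (.atom At.s) ∧
    STy (fun _ => none) counterTerm (.atom At.s) := by
  constructor
  · intro h
    have key := der_prod h
    simp only [List.map_cons, List.map_nil, List.prod_cons, List.prod_nil, mul_one] at key
    have : gT tyB * gT tyA ≠ gT (.atom At.s) := by decide
    exact this key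
  · exact STy.app (STy.const K.B)
      (STy.lam (STy.lam (STy.app
        (STy.app (STy.const K.A) (STy.var (by simp)))
        (STy.var (by simp)))))
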